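/- For j = 1,...,n let F_j be the equal-revenue distribution truncated at 2^{j+1}, and let S ⊆ {1,...,n}. Define the pricing p by p_j = 2^j for j ∈ S and p_j = ∞ for j ∉ S. Then |S|/3 ≤ R(p) ≤ |S|; that is, R(p,F) ≥ |S|/3 for every compatible joint distribution F, and R(p,F) ≤ |S| for every compatible joint distribution F. Moreover, n/3 ≤ R* ≤ n, so p is Θ(n/|S|)-max-min optimal. -/

import Mathlib

open MeasureTheory
open scoped ENNReal NNReal

noncomputable section

/-- A buyer's purchase rule for `n` items: given a valuation profile and a vector of item prices
(in `[0,∞]`), `choose` returns the purchased item (or `none` if nothing is purchased).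
The axioms say: a purchased item has a finite price and yields nonnegative utility
(`feasible`), the purchased item maximizes utility among all items (`optimal`), and the buyer
does purchase whenever some item yields nonnegative utility (`active`). Ties among
utility-maximizing items are broken according to the (fixed) rule embodied by `choose`. -/
structure BuyerRule (n : ℕ) where
  choose : (Fin n → ℝ) → (Fin n → ℝ≥0∞) → Option (Fin n)
  feasible : ∀ v p j, choose v p = some j → p j ≠ ⊤ ∧ (p j).toReal ≤ v j
  optimal : ∀ v p j k, choose v p = some j → p k ≠ ⊤ →
      v k - (p k).toReal ≤ v j - (p j).toReal
  active : ∀ v p, (∃ k, p k ≠ ⊤ ∧ (p k).toReal ≤ v k) → (choose v p).isSome = true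

/-- The seller's revenue from valuation profile `v` under pricing `p`. -/
def BuyerRule.revenue {n : ℕ} (B : BuyerRule n) (p : Fin n → ℝ≥0∞) (v : Fin n → ℝ) : ℝ≥0∞ :=
  (B.choose v p).elim 0 (fun j => p j)

/-- A joint distribution `F` on valuation profiles is compatible with the marginals `marg`
if it is a probability measure whose `j`-th one-dimensional marginal is `marg j` for every `j`. -/
def Compatible {n : ℕ} (marg : Fin n → Measure ℝ) (F : Measure (Fin n → ℝ)) : Prop :=
  IsProbabilityMeasure F ∧ ∀ j, F.map (fun v => v j) = marg j

/-- `R(p,F)`: the expected revenue of pricing `p` under joint distribution `F`. -/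
def expRev {n : ℕ} (B : BuyerRule n) (p : Fin n → ℝ≥0∞) (F : Measure (Fin n → ℝ)) : ℝ≥0∞ :=
  ∫⁻ v, B.revenue p v ∂F

/-- `R(p)`: the robust revenue guarantee of `p`, the infimum of `R(p,F)` over compatible `F`. -/
def robustRev {n : ℕ} (B : BuyerRule n) (marg : Fin n → Measure ℝ) (p : Fin n → ℝ≥0∞) : ℝ≥0∞ :=
  ⨅ (F : Measure (Fin n → ℝ)) (_ : Compatible marg F), expRev B p F

/-- `R*`: the optimal robust revenue guarantee over all pricings. -/
def optRobust {n : ℕ} (B : BuyerRule n) (marg : Fin n → Measure ℝ) : ℝ≥0∞ :=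
  ⨆ p : Fin n → ℝ≥0∞, robustRev B marg p

/-- The equal-revenue distribution truncated at `t`: the distribution of `min(X, t)` where
`Pr[X > x] = 1/x` for `x ≥ 1`. It has density `1/x²` on `[1, t)` and an atom of mass `1/t`
at `t`. -/
def erTrunc (t : ℝ) : Measure ℝ :=
  (volume.restrict (Set.Ico 1 t)).withDensity (fun x => ENNReal.ofReal (x ^ 2)⁻¹)
    + ENNReal.ofReal t⁻¹ • Measure.dirac t

/-!
Almost surely `v i ≤ 2 ^ (i + 2)`. If `m` is the largest item of `S` with `v m > 3 * 2 ^ m`,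
buying `m` leaves utility `> 2 ^ m`, which no offered item `j < m` can match (it leaves at most
`2 ^ (j + 1)`). So the buyer pays `2 ^ (j + 1)` for some `j ≥ m`, more than `∑_{i ≤ m} 2 ^ i`:
the revenue dominates `∑_{i ∈ S} 2 ^ i · 1[v i > 3 * 2 ^ i]` pointwise, and the expectation of
the latter, `|S| / 3`, depends only on the marginals.

Conversely the revenue is at most `∑ p i · 1[v i ≥ p i]` over the items with finite price, and a
single posted price extracts at most `1` from an equal-revenue marginal. The bound `R* ≤ n`
needs one compatible distribution: the product of the marginals.
-/

open Set

lemma lintegral_Ico_inv_sq {a b : ℝ} (ha : 0 < a) (hab : a ≤ b) :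
    ∫⁻ x in Ico a b, ENNReal.ofReal (x ^ 2)⁻¹ = ENNReal.ofReal (a⁻¹ - b⁻¹) := by
  have hderiv : ∀ x ∈ uIcc a b, HasDerivAt (fun x : ℝ => -x⁻¹) (x ^ 2)⁻¹ x := fun x hx => by
    rw [uIcc_of_le hab] at hx
    simpa using (hasDerivAt_inv (ha.trans_le hx.1).ne').fun_neg
  have hcont : ContinuousOn (fun x : ℝ => (x ^ 2)⁻¹) (Icc a b) :=
    (continuousOn_pow 2).inv₀ fun x hx => pow_ne_zero 2 (ha.trans_le hx.1).ne'
  have hint : IntegrableOn (fun x : ℝ => (x ^ 2)⁻¹) (Icc a b) := hcont.integrableOn_Icc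
  rw [← ofReal_integral_eq_lintegral_ofReal (hint.mono_set Ico_subset_Icc_self)
      (ae_of_all _ fun x => by positivity),
    integral_Ico_eq_integral_Ioo, ← integral_Ioc_eq_integral_Ioo,
    ← intervalIntegral.integral_of_le hab,
    intervalIntegral.integral_eq_sub_of_hasDerivAt hderiv
      ((intervalIntegrable_iff_integrableOn_Icc_of_le hab).2 hint)]
  ring_nf

lemma erTrunc_apply (t : ℝ) {s : Set ℝ} (hs : MeasurableSet s) :
    erTrunc t s = (∫⁻ x in s ∩ Ico 1 t, ENNReal.ofReal (x ^ 2)⁻¹)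
      + ENNReal.ofReal t⁻¹ * s.indicator 1 t := by
  rw [erTrunc, Measure.add_apply, Measure.smul_apply, withDensity_apply _ hs,
    Measure.restrict_restrict hs, Measure.dirac_apply' _ hs, smul_eq_mul]

lemma erTrunc_Ioi_self (t : ℝ) : erTrunc t (Ioi t) = 0 := by
  have hempty : Ioi t ∩ Ico 1 t = ∅ := by
    ext x; simp only [mem_inter_iff, mem_Ioi, mem_Ico, mem_empty_iff_false, iff_false]
    rintro ⟨htx, -, hxt⟩; exact hxt.not_gt htx
  simp [erTrunc_apply t measurableSet_Ioi, hempty]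

lemma erTrunc_singleton_of_ne {t x : ℝ} (hx : x ≠ t) : erTrunc t {x} = 0 := by
  simp [erTrunc_apply t (measurableSet_singleton x), setLIntegral_measure_zero _ _
    (measure_mono_null inter_subset_left (Real.volume_singleton (a := x))), hx.symm]

lemma erTrunc_eq_inv_of_inter_Ico {t r : ℝ} (hr : 1 ≤ r) (hrt : r ≤ t) {s : Set ℝ}
    (hs : MeasurableSet s) (hts : t ∈ s) (hsr : s ∩ Ico 1 t = Ico r t) :
    erTrunc t s = ENNReal.ofReal r⁻¹ := by
  have hr0 : 0 < r := zero_lt_one.trans_le hr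
  rw [erTrunc_apply t hs, hsr, lintegral_Ico_inv_sq hr0 hrt, indicator_of_mem hts, Pi.one_apply,
    mul_one, ← ENNReal.ofReal_add (sub_nonneg.2 (inv_anti₀ hr0 hrt))
      (inv_nonneg.2 (hr0.le.trans hrt)), sub_add_cancel]

lemma erTrunc_Ici {t r : ℝ} (hr : 1 ≤ r) (hrt : r ≤ t) :
    erTrunc t (Ici r) = ENNReal.ofReal r⁻¹ :=
  erTrunc_eq_inv_of_inter_Ico hr hrt measurableSet_Ici hrt <| by
    ext x; simp only [mem_inter_iff, mem_Ici, mem_Ico]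
    exact ⟨fun ⟨hrx, _, hxt⟩ => ⟨hrx, hxt⟩, fun ⟨hrx, hxt⟩ => ⟨hrx, hr.trans hrx, hxt⟩⟩

lemma erTrunc_Ioi {t x : ℝ} (hx : 1 ≤ x) (hxt : x < t) :
    erTrunc t (Ioi x) = ENNReal.ofReal x⁻¹ := by
  rw [measure_congr (Ioi_ae_eq_Ici' (erTrunc_singleton_of_ne hxt.ne)), erTrunc_Ici hx hxt.le]

lemma isProbabilityMeasure_erTrunc {t : ℝ} (ht : 1 ≤ t) : IsProbabilityMeasure (erTrunc t) :=
  ⟨by simpa using erTrunc_eq_inv_of_inter_Ico le_rfl ht .univ (mem_univ t) (univ_inter _)⟩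

lemma ofReal_mul_erTrunc_Ici_le_one {t : ℝ} (ht : 1 ≤ t) (r : ℝ) :
    ENNReal.ofReal r * erTrunc t (Ici r) ≤ 1 := by
  rcases lt_or_ge r 1 with hr1 | hr1
  · have := isProbabilityMeasure_erTrunc ht
    calc ENNReal.ofReal r * erTrunc t (Ici r) ≤ ENNReal.ofReal 1 * 1 :=
          mul_le_mul' (ENNReal.ofReal_le_ofReal hr1.le) prob_le_one
      _ = 1 := by simp
  rcases le_or_gt r t with hrt | htr
  · rw [erTrunc_Ici hr1 hrt, ← ENNReal.ofReal_mul (by linarith),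
      mul_inv_cancel₀ (by linarith), ENNReal.ofReal_one]
  · rw [measure_mono_null (Ici_subset_Ioi.2 htr) (erTrunc_Ioi_self t), mul_zero]
    exact zero_le_one

open Finset in
lemma BuyerRule.revenue_le_sum_indicator {n : ℕ} (B : BuyerRule n) (p : Fin n → ℝ≥0∞)
    (v : Fin n → ℝ) :
    B.revenue p v ≤
      ∑ i with p i ≠ ⊤, (Function.eval i ⁻¹' Ici (p i).toReal).indicator (fun _ => p i) v := by
  cases hc : B.choose v p with
  | none => simp [BuyerRule.revenue, hc]
  | some j =>
    obtain ⟨hj, hvj⟩ := B.feasible v p j hc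
    calc B.revenue p v = (Function.eval j ⁻¹' Ici (p j).toReal).indicator (fun _ => p j) v := by
          rw [indicator_of_mem (show v ∈ Function.eval j ⁻¹' Ici (p j).toReal from hvj)]
          simp [BuyerRule.revenue, hc]
      _ ≤ _ := single_le_sum
          (f := fun i => (Function.eval i ⁻¹' Ici (p i).toReal).indicator (fun _ => p i) v)
          (fun _ _ => zero_le) (mem_filter.2 ⟨mem_univ j, hj⟩)

lemma Compatible.measure_eval_preimage {n : ℕ} {marg : Fin n → Measure ℝ}
    {F : Measure (Fin n → ℝ)} (hF : Compatible marg F) (i : Fin n) {s : Set ℝ}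
    (hs : MeasurableSet s) : F (Function.eval i ⁻¹' s) = marg i s := by
  rw [← Measure.map_apply (measurable_pi_apply i) hs, hF.2 i]

lemma compatible_pi {n : ℕ} (marg : Fin n → Measure ℝ) [∀ i, IsProbabilityMeasure (marg i)] :
    Compatible marg (Measure.pi marg) :=
  ⟨inferInstance, fun i => (measurePreserving_eval marg i).map_eq⟩

open Finset in
lemma expRev_le_card_ne_top {n : ℕ} (B : BuyerRule n) {marg : Fin n → Measure ℝ}
    (hmarg : ∀ i (r : ℝ), ENNReal.ofReal r * marg i (Ici r) ≤ 1) (p : Fin n → ℝ≥0∞)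
    {F : Measure (Fin n → ℝ)} (hF : Compatible marg F) :
    expRev B p F ≤ #{i | p i ≠ ⊤} := by
  calc expRev B p F
      ≤ ∫⁻ v, ∑ i with p i ≠ ⊤,
          (Function.eval i ⁻¹' Ici (p i).toReal).indicator (fun _ => p i) v ∂F :=
        lintegral_mono (B.revenue_le_sum_indicator p)
    _ = ∑ i with p i ≠ ⊤, p i * marg i (Ici (p i).toReal) := by
        rw [lintegral_finsetSum _ fun i _ =>
          measurable_const.indicator (measurable_pi_apply i measurableSet_Ici)]
        refine sum_congr rfl fun i _ => ?_
        rw [lintegral_indicator_const (measurable_pi_apply i measurableSet_Ici),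
          hF.measure_eval_preimage i measurableSet_Ici]
    _ ≤ ∑ i with p i ≠ ⊤, 1 := sum_le_sum fun i hi => by
        simpa [ENNReal.ofReal_toReal (mem_filter.1 hi).2] using hmarg i (p i).toReal
    _ = #{i | p i ≠ ⊤} := by simp

def dyadicPricing {n : ℕ} (S : Finset (Fin n)) (i : Fin n) : ℝ≥0∞ :=
  if i ∈ S then ENNReal.ofReal (2 ^ ((i : ℕ) + 1)) else ⊤

open Finset in
lemma card_dyadicPricing_ne_top {n : ℕ} (S : Finset (Fin n)) :
    #{i | dyadicPricing S i ≠ ⊤} = #S := by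
  congr 1
  ext i
  by_cases hi : i ∈ S <;> simp [dyadicPricing, hi]

lemma toReal_dyadicPricing {n : ℕ} {S : Finset (Fin n)} {i : Fin n} (hi : i ∈ S) :
    (dyadicPricing S i).toReal = 2 ^ ((i : ℕ) + 1) := by
  simp [dyadicPricing, hi]

lemma BuyerRule.exists_choose_dyadicPricing {n : ℕ} (B : BuyerRule n) (S : Finset (Fin n))
    {v : Fin n → ℝ} (hv : ∀ i, v i ≤ 2 ^ ((i : ℕ) + 2)) {m : Fin n} (hm : m ∈ S)
    (hvm : 3 * 2 ^ (m : ℕ) < v m) :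
    ∃ j ∈ S, B.choose v (dyadicPricing S) = some j ∧ m ≤ j := by
  have hpm : (dyadicPricing S m).toReal ≤ v m := by
    rw [toReal_dyadicPricing hm, pow_succ]
    linarith [pow_pos (two_pos (α := ℝ)) (m : ℕ)]
  have hmtop : dyadicPricing S m ≠ ⊤ := by simp [dyadicPricing, hm]
  obtain ⟨j, hj⟩ := Option.isSome_iff_exists.1 (B.active v _ ⟨m, hmtop, hpm⟩)
  have hjS : j ∈ S := by
    by_contra hjS
    exact (B.feasible v _ j hj).1 (by simp [dyadicPricing, hjS])
  refine ⟨j, hjS, hj, ?_⟩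
  have hutil := B.optimal v _ j m hj hmtop
  rw [toReal_dyadicPricing hjS, toReal_dyadicPricing hm] at hutil
  have hlt : (2 : ℝ) ^ (m : ℕ) < 2 ^ ((j : ℕ) + 1) := by
    linarith [hv j, pow_succ (2 : ℝ) (m : ℕ), pow_succ (2 : ℝ) ((j : ℕ) + 1)]
  have := (pow_lt_pow_iff_right₀ one_lt_two).1 hlt
  exact Fin.le_iff_val_le_val.2 (by omega)

open Finset in
lemma BuyerRule.sum_indicator_le_revenue_dyadicPricing {n : ℕ} (B : BuyerRule n)
    (S : Finset (Fin n)) {v : Fin n → ℝ} (hv : ∀ i, v i ≤ 2 ^ ((i : ℕ) + 2)) :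
    ∑ i ∈ S, (Function.eval i ⁻¹' Ioi ((3 : ℝ) * 2 ^ (i : ℕ))).indicator
        (fun _ => (2 : ℝ≥0∞) ^ (i : ℕ)) v
      ≤ B.revenue (dyadicPricing S) v := by
  classical
  simp only [Set.indicator_apply, Set.mem_preimage, Function.eval, Set.mem_Ioi, ← sum_filter]
  set T := S.filter fun i : Fin n => 3 * 2 ^ (i : ℕ) < v i
  rcases T.eq_empty_or_nonempty with hT | hT
  · simp [hT]
  obtain ⟨hmS, hvm⟩ := mem_filter.1 (T.max'_mem hT)
  obtain ⟨j, hjS, hj, hmj⟩ := B.exists_choose_dyadicPricing S hv hmS hvm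
  have hgeom : ∑ i ∈ T, 2 ^ (i : ℕ) < 2 ^ ((T.max' hT : ℕ) + 1) := by
    refine (sum_map T Fin.valEmbedding fun k => 2 ^ k).symm.trans_lt ?_
    refine Nat.geomSum_lt le_rfl fun k hk => ?_
    obtain ⟨i, hi, rfl⟩ := mem_map.1 hk
    exact Nat.lt_succ_of_le (T.le_max' i hi)
  calc ∑ i ∈ T, (2 : ℝ≥0∞) ^ (i : ℕ) = ((∑ i ∈ T, 2 ^ (i : ℕ) : ℕ) : ℝ≥0∞) := by push_cast; rfl
    _ ≤ ((2 ^ ((j : ℕ) + 1) : ℕ) : ℝ≥0∞) := by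
        exact_mod_cast hgeom.le.trans (Nat.pow_le_pow_right two_pos (by simpa using hmj))
    _ = B.revenue (dyadicPricing S) v := by
        simp [BuyerRule.revenue, hj, dyadicPricing, hjS, ENNReal.ofReal_pow]

lemma Compatible.ae_le_two_pow {n : ℕ} {marg : Fin n → Measure ℝ}
    (hmarg : ∀ i : Fin n, marg i = erTrunc ((2 : ℝ) ^ ((i : ℕ) + 2)))
    {F : Measure (Fin n → ℝ)} (hF : Compatible marg F) :
    ∀ᵐ v ∂F, ∀ i : Fin n, v i ≤ 2 ^ ((i : ℕ) + 2) := by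
  refine ae_all_iff.2 fun i => ?_
  have hnull : F (Function.eval i ⁻¹' Ioi (2 ^ ((i : ℕ) + 2))) = 0 := by
    rw [hF.measure_eval_preimage i measurableSet_Ioi, hmarg, erTrunc_Ioi_self]
  filter_upwards [measure_eq_zero_iff_ae_notMem.1 hnull] with v hv
  exact not_lt.1 hv

open Finset in
lemma card_div_three_le_expRev_dyadicPricing {n : ℕ} (B : BuyerRule n)
    {marg : Fin n → Measure ℝ} (hmarg : ∀ i : Fin n, marg i = erTrunc ((2 : ℝ) ^ ((i : ℕ) + 2)))
    (S : Finset (Fin n)) {F : Measure (Fin n → ℝ)} (hF : Compatible marg F) :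
    (#S : ℝ≥0∞) / 3 ≤ expRev B (dyadicPricing S) F := by
  have hterm (i : Fin n) : ∫⁻ v, (Function.eval i ⁻¹' Ioi ((3 : ℝ) * 2 ^ (i : ℕ))).indicator
      (fun _ => (2 : ℝ≥0∞) ^ (i : ℕ)) v ∂F = 3⁻¹ := by
    have h2i : (1 : ℝ) ≤ 2 ^ (i : ℕ) := one_le_pow₀ one_le_two
    rw [lintegral_indicator_const (measurable_pi_apply i measurableSet_Ioi),
      hF.measure_eval_preimage i measurableSet_Ioi, hmarg,
      erTrunc_Ioi (by linarith) (by rw [pow_add]; linarith)]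
    calc (2 : ℝ≥0∞) ^ (i : ℕ) * ENNReal.ofReal (3 * 2 ^ (i : ℕ))⁻¹
        = ENNReal.ofReal (2 ^ (i : ℕ) * (3 * 2 ^ (i : ℕ))⁻¹) := by
          rw [ENNReal.ofReal_mul (by positivity), ENNReal.ofReal_pow zero_le_two,
            ENNReal.ofReal_ofNat]
      _ = 3⁻¹ := by
          rw [mul_inv, mul_left_comm, mul_inv_cancel₀ (by positivity), mul_one,
            ENNReal.ofReal_inv_of_pos three_pos, ENNReal.ofReal_ofNat]
  calc (#S : ℝ≥0∞) / 3
      = ∑ i ∈ S, ∫⁻ v, (Function.eval i ⁻¹' Ioi ((3 : ℝ) * 2 ^ (i : ℕ))).indicator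
        (fun _ => (2 : ℝ≥0∞) ^ (i : ℕ)) v ∂F := by simp [hterm, div_eq_mul_inv]
    _ = ∫⁻ v, ∑ i ∈ S, (Function.eval i ⁻¹' Ioi ((3 : ℝ) * 2 ^ (i : ℕ))).indicator
        (fun _ => (2 : ℝ≥0∞) ^ (i : ℕ)) v ∂F :=
      (lintegral_finsetSum _ fun i _ =>
        measurable_const.indicator (measurable_pi_apply i measurableSet_Ioi)).symm
    _ ≤ expRev B (dyadicPricing S) F :=
      lintegral_mono_ae <| (hF.ae_le_two_pow hmarg).mono fun v hv =>
        B.sum_indicator_le_revenue_dyadicPricing S hv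

/-- Item `i : Fin n` is the paper's item `j = i + 1`. -/
theorem truncated_equal_revenue_pricing_bounds
    (n : ℕ) (B : BuyerRule n)
    (marg : Fin n → Measure ℝ) (hmarg : ∀ i : Fin n, marg i = erTrunc ((2 : ℝ) ^ ((i : ℕ) + 2)))
    (S : Finset (Fin n)) (p : Fin n → ℝ≥0∞)
    (hp : ∀ i : Fin n, p i = if i ∈ S then ENNReal.ofReal ((2 : ℝ) ^ ((i : ℕ) + 1)) else ⊤) :
    (∀ F : Measure (Fin n → ℝ), Compatible marg F →
        (S.card : ℝ≥0∞) / 3 ≤ expRev B p F ∧ expRev B p F ≤ (S.card : ℝ≥0∞)) ∧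
    (S.card : ℝ≥0∞) / 3 ≤ robustRev B marg p ∧ robustRev B marg p ≤ (S.card : ℝ≥0∞) ∧
    (n : ℝ≥0∞) / 3 ≤ optRobust B marg ∧ optRobust B marg ≤ (n : ℝ≥0∞) := by
  obtain rfl : p = dyadicPricing S := funext hp
  have hone (i : Fin n) : (1 : ℝ) ≤ 2 ^ ((i : ℕ) + 2) := one_le_pow₀ one_le_two
  have : ∀ i, IsProbabilityMeasure (marg i) := fun i =>
    hmarg i ▸ isProbabilityMeasure_erTrunc (hone i)
  have hrev (i : Fin n) (r : ℝ) : ENNReal.ofReal r * marg i (Ici r) ≤ 1 :=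
    hmarg i ▸ ofReal_mul_erTrunc_Ici_le_one (hone i) r
  have hupper {F : Measure (Fin n → ℝ)} (hF : Compatible marg F) :
      expRev B (dyadicPricing S) F ≤ S.card :=
    (expRev_le_card_ne_top B hrev _ hF).trans_eq (by rw [card_dyadicPricing_ne_top])
  have hlower (T : Finset (Fin n)) : (T.card : ℝ≥0∞) / 3 ≤ robustRev B marg (dyadicPricing T) :=
    le_iInf₂ fun F hF => card_div_three_le_expRev_dyadicPricing B hmarg T hF
  refine ⟨fun F hF => ⟨card_div_three_le_expRev_dyadicPricing B hmarg S hF, hupper hF⟩,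
    hlower S, iInf₂_le_of_le _ (compatible_pi marg) (hupper (compatible_pi marg)),
    le_iSup_of_le (dyadicPricing Finset.univ) (by simpa using hlower Finset.univ),
    iSup_le fun q => iInf₂_le_of_le _ (compatible_pi marg) ?_⟩
  exact (expRev_le_card_ne_top B hrev q (compatible_pi marg)).trans
    (by exact_mod_cast card_finset_fin_le _)
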